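/- Let k₁ > 0 and k₂ > 0 be real parameters. For all real x, y with |x| > |y|, the kernel K(x,y) is strictly positive: K(x,y) > 0. -/

import Mathlib

open Real MeasureTheory intervalIntegral

noncomputable section

/-- `A(x) = |2 sinh(x/2)|^{2k₁} · |2 sinh x|^{2k₂}` -/
def A (k₁ k₂ x : ℝ) : ℝ :=
  |2 * Real.sinh (x / 2)| ^ (2 * k₁) * |2 * Real.sinh x| ^ (2 * k₂)

/-- `c = 2^{3k₁+3k₂} · Γ(k₁+k₂+1/2) / (√π · Γ(k₁) · Γ(k₂))` -/
def c (k₁ k₂ : ℝ) : ℝ :=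
  2 ^ (3 * k₁ + 3 * k₂) * Real.Gamma (k₁ + k₂ + 1 / 2) /
    (Real.sqrt Real.pi * Real.Gamma k₁ * Real.Gamma k₂)

/-- `σ(x,y,z) = sign(x)·( e^{x/2}·(2 cosh(x/2)) − e^{−y/2}·(2 cosh(z/2)) )` -/
def sigmaK (x y z : ℝ) : ℝ :=
  Real.sign x *
    (Real.exp (x / 2) * (2 * Real.cosh (x / 2)) -
      Real.exp (-y / 2) * (2 * Real.cosh (z / 2)))

/-- The kernel `K(x,y)` of the intertwining operator, for `|x| > |y|`. -/
def K (k₁ k₂ x y : ℝ) : ℝ :=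
  c k₁ k₂ / 4 * (A k₁ k₂ x)⁻¹ *
    ∫ z in |y|..|x|,
      sigmaK x y z * (Real.cosh (z / 2) - Real.cosh (y / 2)) ^ (k₁ - 1) *
        (Real.cosh x - Real.cosh z) ^ (k₂ - 1) * Real.sinh (z / 2)

end

/-! On `(|y|, |x|)` every factor of the integrand is positive: the power factors because `cosh` is
increasing on `[0, ∞)`, and `σ` because multiplying by `sign x` exactly compensates the comparison
of the exponentials `e^x, 1` with `e^{(z-y)/2}, e^{-(y+z)/2}`. The exponents `k₁ - 1`, `k₂ - 1` may be
negative, but near each endpoint the singular power times the derivative of its base is the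
derivative of the continuous function `base^k / k`, hence integrable. A positive integrable
function has positive integral over a nondegenerate interval, and `c`, `A(x)⁻¹` are positive. -/

open Set

theorem cosh_half_sub_cosh_half_pos {y z : ℝ} (h : |y| < z) : 0 < cosh (z / 2) - cosh (y / 2) :=
  sub_pos.2 <| cosh_lt_cosh.2 <| by rw [abs_div, abs_div, abs_two]; linarith [le_abs_self z]

theorem cosh_sub_cosh_pos {x z : ℝ} (hz : 0 ≤ z) (h : z < |x|) : 0 < cosh x - cosh z :=
  sub_pos.2 <| cosh_lt_cosh.2 <| by rwa [abs_of_nonneg hz]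

theorem exp_mul_two_cosh (u v : ℝ) : exp u * (2 * cosh v) = exp (u + v) + exp (u - v) := by
  rw [cosh_eq, exp_add, exp_sub, exp_neg]
  field_simp

theorem sigmaK_pos {x y z : ℝ} (hyz : |y| < z) (hzx : z < |x|) : 0 < sigmaK x y z := by
  rw [sigmaK, exp_mul_two_cosh, exp_mul_two_cosh, add_halves, sub_self, exp_zero]
  obtain ⟨hy₁, hy₂⟩ := abs_lt.1 hyz
  rcases lt_trichotomy x 0 with hx | rfl | hx
  · rw [abs_of_neg hx] at hzx
    rw [sign_of_neg hx]
    have : exp x < exp (-y / 2 - z / 2) := exp_lt_exp.2 (by linarith)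
    have : 1 < exp (-y / 2 + z / 2) := one_lt_exp_iff.2 (by linarith)
    linarith
  · exact absurd ((abs_nonneg y).trans_lt (hyz.trans hzx)) (by simp)
  · rw [abs_of_pos hx] at hzx
    rw [sign_of_pos hx]
    have : exp (-y / 2 + z / 2) < exp x := exp_lt_exp.2 (by linarith)
    have : exp (-y / 2 - z / 2) < 1 := exp_lt_one_iff.2 (by linarith)
    linarith

theorem c_pos {k₁ k₂ : ℝ} (hk₁ : 0 < k₁) (hk₂ : 0 < k₂) : 0 < c k₁ k₂ := by
  unfold c
  positivity

theorem A_pos (k₁ k₂ : ℝ) {x : ℝ} (hx : x ≠ 0) : 0 < A k₁ k₂ x := by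
  unfold A
  positivity

theorem intervalIntegrable_deriv_mul_rpow_of_nonneg {g g' : ℝ → ℝ} {a b k : ℝ} (hab : a ≤ b)
    (hk : 0 < k) (hg : ContinuousOn g (Icc a b))
    (hderiv : ∀ z ∈ Ioo a b, HasDerivAt g (g' z) z) (hg_pos : ∀ z ∈ Ioo a b, 0 < g z)
    (hg' : ∀ z ∈ Ioo a b, 0 ≤ g' z) :
    IntervalIntegrable (fun z => g' z * g z ^ (k - 1)) volume a b := by
  refine (intervalIntegrable_iff_integrableOn_Ioc_of_le hab).2 <|
    integrableOn_deriv_of_nonneg (g := fun z => g z ^ k / k)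
      ((hg.rpow_const fun _ _ => Or.inr hk.le).div_const k) (fun z hz => ?_) fun z hz => ?_
  · exact (((hderiv z hz).rpow_const (Or.inl (hg_pos z hz).ne')).div_const k).congr_deriv
      (by field_simp)
  · exact mul_nonneg (hg' z hz) (rpow_nonneg (hg_pos z hz).le _)

theorem intervalIntegrable_deriv_mul_rpow_of_nonpos {g g' : ℝ → ℝ} {a b k : ℝ} (hab : a ≤ b)
    (hk : 0 < k) (hg : ContinuousOn g (Icc a b))
    (hderiv : ∀ z ∈ Ioo a b, HasDerivAt g (g' z) z) (hg_pos : ∀ z ∈ Ioo a b, 0 < g z)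
    (hg' : ∀ z ∈ Ioo a b, g' z ≤ 0) :
    IntervalIntegrable (fun z => g' z * g z ^ (k - 1)) volume a b := by
  have h : IntervalIntegrable (fun z => -(g' z * g z ^ (k - 1))) volume a b := by
    refine (intervalIntegrable_iff_integrableOn_Ioc_of_le hab).2 <|
      integrableOn_deriv_of_nonneg (g := fun z => -(g z ^ k / k))
        ((hg.rpow_const fun _ _ => Or.inr hk.le).div_const k).neg (fun z hz => ?_) fun z hz => ?_
    · exact (((hderiv z hz).rpow_const (Or.inl (hg_pos z hz).ne')).div_const k).neg.congr_deriv
        (by field_simp)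
    · exact neg_nonneg.2 (mul_nonpos_of_nonpos_of_nonneg (hg' z hz) (rpow_nonneg (hg_pos z hz).le _))
  simpa [Pi.neg_def] using h.neg

theorem intervalIntegrable_kernel_integrand {k₁ k₂ x y : ℝ} (hk₁ : 0 < k₁) (hk₂ : 0 < k₂)
    (hxy : |y| < |x|) {s : ℝ → ℝ} (hs : Continuous s) :
    IntervalIntegrable (fun z => s z * (cosh (z / 2) - cosh (y / 2)) ^ (k₁ - 1) *
      (cosh x - cosh z) ^ (k₂ - 1) * sinh (z / 2)) volume |y| |x| := by
  obtain ⟨m, hym, hmx⟩ := exists_between hxy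
  -- Split at `m` so that each piece carries only one of the two singular factors.
  refine IntervalIntegrable.trans (b := m) ?_ ?_
  · have h := intervalIntegrable_deriv_mul_rpow_of_nonneg hym.le hk₁
      (g := fun z => cosh (z / 2) - cosh (y / 2)) (g' := fun z => sinh (z / 2) / 2) (by fun_prop)
      (fun z _ => (((hasDerivAt_id' z).div_const 2).cosh.sub_const _).congr_deriv (by ring))
      (fun _ hz => cosh_half_sub_cosh_half_pos hz.1)
      (fun z hz => div_nonneg (sinh_nonneg_iff.2 (by linarith [abs_nonneg y, hz.1])) zero_le_two)
    have hcont : ContinuousOn (fun z => 2 * s z * (cosh x - cosh z) ^ (k₂ - 1)) (uIcc |y| m) := by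
      refine ContinuousOn.mul (by fun_prop) <| ContinuousOn.rpow_const (by fun_prop) fun z hz => ?_
      rw [uIcc_of_le hym.le] at hz
      exact Or.inl (cosh_sub_cosh_pos (by linarith [abs_nonneg y, hz.1]) (by linarith [hz.2])).ne'
    convert h.continuousOn_mul hcont using 1
    funext z
    ring
  · have h := intervalIntegrable_deriv_mul_rpow_of_nonpos hmx.le hk₂
      (g := fun z => cosh x - cosh z) (g' := fun z => -sinh z) (by fun_prop)
      (fun z _ => ((hasDerivAt_cosh z).const_sub _))
      (fun _ hz => cosh_sub_cosh_pos (by linarith [abs_nonneg y, hz.1]) hz.2)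
      (fun z hz => neg_nonpos.2 (sinh_nonneg_iff.2 (by linarith [abs_nonneg y, hz.1])))
    have hcont : ContinuousOn
        (fun z => -(s z * (cosh (z / 2) - cosh (y / 2)) ^ (k₁ - 1)) / (2 * cosh (z / 2)))
        (uIcc m |x|) := by
      refine ContinuousOn.div (ContinuousOn.neg <| ContinuousOn.mul (by fun_prop) <|
        ContinuousOn.rpow_const (by fun_prop) fun z hz => ?_) (by fun_prop)
        fun z _ => (mul_pos two_pos (cosh_pos _)).ne'
      rw [uIcc_of_le hmx.le] at hz
      exact Or.inl (cosh_half_sub_cosh_half_pos (by linarith [hz.1])).ne'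
    convert h.continuousOn_mul hcont using 1
    funext z
    rw [show sinh z = 2 * sinh (z / 2) * cosh (z / 2) by rw [← sinh_two_mul]; ring_nf]
    field_simp [(cosh_pos (z / 2)).ne']

theorem stmt2 (k₁ k₂ : ℝ) (hk₁ : 0 < k₁) (hk₂ : 0 < k₂)
    (x y : ℝ) (hxy : |y| < |x|) :
    0 < K k₁ k₂ x y := by
  have hx : x ≠ 0 := by
    rintro rfl
    exact (abs_nonneg y).not_gt (by simpa using hxy)
  have hI : 0 < ∫ z in |y|..|x|,
      sigmaK x y z * (cosh (z / 2) - cosh (y / 2)) ^ (k₁ - 1) *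
        (cosh x - cosh z) ^ (k₂ - 1) * sinh (z / 2) := by
    refine intervalIntegral_pos_of_pos_on
      (intervalIntegrable_kernel_integrand hk₁ hk₂ hxy (by unfold sigmaK; fun_prop))
      (fun z ⟨hyz, hzx⟩ => ?_) hxy
    have hz : 0 < z := (abs_nonneg y).trans_lt hyz
    exact mul_pos (mul_pos (mul_pos (sigmaK_pos hyz hzx)
      (rpow_pos_of_pos (cosh_half_sub_cosh_half_pos hyz) _))
      (rpow_pos_of_pos (cosh_sub_cosh_pos hz.le hzx) _)) (sinh_pos_iff.2 (half_pos hz))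
  exact mul_pos (mul_pos (div_pos (c_pos hk₁ hk₂) four_pos) (inv_pos.2 (A_pos k₁ k₂ hx))) hI
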